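/- Theorem 2.1, part 1 (interchange of integration and differentiation). Let π be a probability measure on Θ such that (i) the function θ ↦ Q(θ,Y) is π-integrable, and (ii) there exists M < ∞ with f(Y|θ,t) ≤ M for all t ∈ [0,1] and π-almost every θ. Then for every t ∈ [0,1] the map s ↦ z_s = ∫_Θ f(Y|θ,s) dπ(θ) is differentiable at t (one-sidedly at the endpoints, i.e. within [0,1]) with derivative ∫_Θ U(θ,Y,t) f(Y|θ,t) dπ(θ). -/

import Mathlib

open MeasureTheory Real Filter Set

/-- The parameter space Θ of a factor model with `p` outcomes, `k+1` factors and `n`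
observations: loadings Λ ∈ ℝ^{p×(k+1)}, variances σ² ∈ (0,∞)^p and latent factors
η = (η₁,…,η_n), ηᵢ ∈ ℝ^{k+1}. -/
abbrev FactorParam (p k n : ℕ) : Type :=
  Matrix (Fin p) (Fin (k + 1)) ℝ × {σ : Fin p → ℝ // ∀ j, 0 < σ j} ×
    (Fin n → Fin (k + 1) → ℝ)

/-- Λ_t : the matrix obtained from Λ by multiplying its last column by `t` (PAMP). -/
def pathLam {p k : ℕ} (t : ℝ) (Λ : Matrix (Fin p) (Fin (k + 1)) ℝ) :
    Matrix (Fin p) (Fin (k + 1)) ℝ :=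
  fun j l => if l = Fin.last k then t * Λ j l else Λ j l

/-- The factor model likelihood f(Y|θ) = ∏ᵢ∏ⱼ (2πσⱼ²)^{-1/2} exp(−(y_{ij} − (Ληᵢ)_j)²/(2σⱼ²)). -/
noncomputable def lik {p k n : ℕ} (Y : Fin n → Fin p → ℝ) (θ : FactorParam p k n) : ℝ :=
  ∏ i : Fin n, ∏ j : Fin p,
    (2 * π * θ.2.1.1 j) ^ (-(1 : ℝ) / 2) *
      Real.exp (-(Y i j - ∑ l, θ.1 j l * θ.2.2 i l) ^ 2 / (2 * θ.2.1.1 j))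

/-- The likelihood along the parametric arithmetic mean path: f(Y|θ,t) = f(Y|(Λ_t,σ²,η)). -/
noncomputable def pathLik {p k n : ℕ} (Y : Fin n → Fin p → ℝ) (θ : FactorParam p k n)
    (t : ℝ) : ℝ :=
  lik Y (pathLam t θ.1, θ.2)

/-- The score function U(θ,Y,t) = ∑ᵢ∑ⱼ (y_{ij} − (Λ_t ηᵢ)_j) σⱼ^{−2} Λ_{jk} η_{ik}. -/
noncomputable def scoreU {p k n : ℕ} (Y : Fin n → Fin p → ℝ) (θ : FactorParam p k n)
    (t : ℝ) : ℝ :=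
  ∑ i : Fin n, ∑ j : Fin p,
    (Y i j - ∑ l, pathLam t θ.1 j l * θ.2.2 i l) * (θ.2.1.1 j)⁻¹ *
      (θ.1 j (Fin.last k) * θ.2.2 i (Fin.last k))

/-- The dominating function Q(θ,Y), free of t. -/
noncomputable def Qbound {p k n : ℕ} (Y : Fin n → Fin p → ℝ) (θ : FactorParam p k n) : ℝ :=
  ∑ i : Fin n, ∑ j : Fin p,
    (|Y i j| + ∑ l, |θ.1 j l| * |θ.2.2 i l|) * (θ.2.1.1 j)⁻¹ *
      (|θ.1 j (Fin.last k)| * |θ.2.2 i (Fin.last k)|)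

/-- The Borel-type product σ-algebra on the space of loading matrices. -/
instance {p k : ℕ} : MeasurableSpace (Matrix (Fin p) (Fin (k + 1)) ℝ) :=
  MeasurableSpace.pi

/-- Differentiation under the integral sign within a convex set of parameters, so that the
endpoints of `[0, 1]` are covered: the mean value theorem bounds the difference quotients by
`bound`, and dominated convergence passes to the limit. -/
theorem hasDerivWithinAt_integral_of_dominated_of_convex {α E : Type*} [MeasurableSpace α]
    {μ : Measure α} [NormedAddCommGroup E] [NormedSpace ℝ E] {F F' : ℝ → α → E} {s : Set ℝ}
    {t : ℝ} {bound : α → ℝ} (hs : Convex ℝ s) (ht : t ∈ s)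
    (hF_meas : ∀ x ∈ s, AEStronglyMeasurable (F x) μ) (hF_int : Integrable (F t) μ)
    (hF' : ∀ᵐ a ∂μ, ∀ x ∈ s, HasDerivWithinAt (F · a) (F' x a) s x)
    (h_bound : ∀ᵐ a ∂μ, ∀ x ∈ s, ‖F' x a‖ ≤ bound a) (bound_integrable : Integrable bound μ) :
    HasDerivWithinAt (fun x => ∫ a, F x a ∂μ) (∫ a, F' t a ∂μ) s t := by
  have h_lipschitz : ∀ᵐ a ∂μ, ∀ x ∈ s, ‖F x a - F t a‖ ≤ bound a * ‖x - t‖ := by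
    filter_upwards [hF', h_bound] with a ha hb x hx
    exact hs.norm_image_sub_le_of_norm_hasDerivWithin_le ha hb ht hx
  have hF_int' : ∀ x ∈ s, Integrable (F x) μ := fun x hx => by
    have hsub : Integrable (fun a => F x a - F t a) μ :=
      (bound_integrable.mul_const ‖x - t‖).mono' ((hF_meas x hx).sub (hF_meas t ht))
        (by filter_upwards [h_lipschitz] with a ha using ha x hx)
    exact (hsub.add hF_int).congr (ae_of_all _ fun a => sub_add_cancel _ _)
  have h_slope : ∀ x ∈ s, ∫ a, slope (F · a) t x ∂μ = slope (fun x => ∫ a, F x a ∂μ) t x :=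
    fun x hx => by
      simp only [slope_def_module, integral_smul, integral_sub (hF_int' x hx) hF_int]
  rw [hasDerivWithinAt_iff_tendsto_slope]
  refine (tendsto_integral_filter_of_dominated_convergence bound ?_ ?_ bound_integrable ?_).congr'
    (eventually_nhdsWithin_of_forall fun x hx => h_slope x hx.1)
  · filter_upwards [self_mem_nhdsWithin] with x hx
    simp only [slope_def_module]
    exact ((hF_meas x hx.1).sub (hF_meas t ht)).const_smul _
  · filter_upwards [self_mem_nhdsWithin] with x hx
    filter_upwards [h_lipschitz] with a ha
    have hxt : 0 < ‖x - t‖ := norm_pos_iff.2 (sub_ne_zero.2 hx.2)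
    rw [slope_def_module, norm_smul, norm_inv, inv_mul_le_iff₀ hxt, mul_comm]
    exact ha x hx.1
  · filter_upwards [hF'] with a ha
    exact hasDerivWithinAt_iff_tendsto_slope.1 (ha t ht)

section FactorModel

variable {p k n : ℕ} (Y : Fin n → Fin p → ℝ)

lemma sum_pathLam_mul (Λ : Matrix (Fin p) (Fin (k + 1)) ℝ) (η : Fin (k + 1) → ℝ)
    (t : ℝ) (j : Fin p) :
    ∑ l, pathLam t Λ j l * η l =
      ∑ l : Fin k, Λ j l.castSucc * η l.castSucc + t * (Λ j (Fin.last k) * η (Fin.last k)) := by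
  rw [Fin.sum_univ_castSucc]
  simp only [pathLam, if_true, (Fin.castSucc_lt_last _).ne, if_false]
  ring

lemma pathLik_eq_mul_exp (θ : FactorParam p k n) (t : ℝ) :
    pathLik Y θ t = (∏ _i : Fin n, ∏ j : Fin p, (2 * π * θ.2.1.1 j) ^ (-(1 : ℝ) / 2)) *
      Real.exp (∑ i : Fin n, ∑ j : Fin p,
        -(Y i j - (∑ l : Fin k, θ.1 j l.castSucc * θ.2.2 i l.castSucc +
          t * (θ.1 j (Fin.last k) * θ.2.2 i (Fin.last k)))) ^ 2 / (2 * θ.2.1.1 j)) := by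
  simp only [pathLik, lik, Real.exp_sum, ← Finset.prod_mul_distrib, sum_pathLam_mul]

lemma pathLik_pos (θ : FactorParam p k n) (t : ℝ) : 0 < pathLik Y θ t := by
  rw [pathLik_eq_mul_exp]
  refine mul_pos (Finset.prod_pos fun _ _ => Finset.prod_pos fun j _ => ?_) (Real.exp_pos _)
  have := θ.2.1.2 j
  exact Real.rpow_pos_of_pos (by positivity) _

lemma hasDerivAt_neg_sq_div (y a b c t : ℝ) (hc : c ≠ 0) :
    HasDerivAt (fun s => -(y - (a + s * b)) ^ 2 / (2 * c)) ((y - (a + t * b)) * c⁻¹ * b) t := by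
  have h := ((((hasDerivAt_id' t).mul_const b).const_add a).const_sub y).fun_pow 2
  refine (h.neg.div_const (2 * c)).congr_deriv ?_
  field_simp
  ring

lemma hasDerivAt_pathLik (θ : FactorParam p k n) (t : ℝ) :
    HasDerivAt (pathLik Y θ) (scoreU Y θ t * pathLik Y θ t) t := by
  have h_exponent := HasDerivAt.fun_sum (u := Finset.univ) fun i _ =>
    HasDerivAt.fun_sum (u := Finset.univ) fun j _ =>
    hasDerivAt_neg_sq_div (Y i j) (∑ l : Fin k, θ.1 j l.castSucc * θ.2.2 i l.castSucc)
      (θ.1 j (Fin.last k) * θ.2.2 i (Fin.last k)) (θ.2.1.1 j) t (θ.2.1.2 j).ne'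
  rw [funext (pathLik_eq_mul_exp Y θ)]
  refine (h_exponent.exp.const_mul _).congr_deriv ?_
  simp only [scoreU, sum_pathLam_mul]
  ring

lemma abs_scoreU_le_Qbound (θ : FactorParam p k n) {t : ℝ} (ht : |t| ≤ 1) :
    |scoreU Y θ t| ≤ Qbound Y θ := by
  refine (Finset.abs_sum_le_sum_abs _ _).trans (Finset.sum_le_sum fun i _ => ?_)
  refine (Finset.abs_sum_le_sum_abs _ _).trans (Finset.sum_le_sum fun j _ => ?_)
  have hΛt : ∀ l, |pathLam t θ.1 j l| ≤ |θ.1 j l| := fun l => by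
    unfold pathLam
    split_ifs
    · rw [abs_mul]
      exact mul_le_of_le_one_left (abs_nonneg _) ht
    · rfl
  have h_residual : |Y i j - ∑ l, pathLam t θ.1 j l * θ.2.2 i l| ≤
      |Y i j| + ∑ l, |θ.1 j l| * |θ.2.2 i l| := by
    refine (abs_sub _ _).trans (add_le_add_right ?_ _)
    refine (Finset.abs_sum_le_sum_abs _ _).trans (Finset.sum_le_sum fun l _ => ?_)
    rw [abs_mul]
    exact mul_le_mul_of_nonneg_right (hΛt l) (abs_nonneg _)
  rw [abs_mul, abs_mul, abs_mul, abs_inv, abs_of_pos (θ.2.1.2 j)]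
  have := θ.2.1.2 j
  gcongr

lemma measurable_lik : Measurable (lik (k := k) Y) := by
  have hσ : ∀ j, Measurable fun θ : FactorParam p k n => θ.2.1.1 j := fun j =>
    (measurable_pi_apply j).comp (by fun_prop)
  unfold lik
  fun_prop

lemma measurable_pathLam (t : ℝ) : Measurable (pathLam (p := p) (k := k) t) := by
  refine measurable_pi_lambda _ fun j => measurable_pi_lambda _ fun l => ?_
  unfold pathLam
  split_ifs <;> fun_prop

lemma measurable_pathLik (t : ℝ) : Measurable fun θ : FactorParam p k n => pathLik Y θ t :=
  (measurable_lik Y).comp ((measurable_pathLam t).prodMap measurable_id)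

end FactorModel

theorem interchange_integral_deriv {p k n : ℕ} (Y : Fin n → Fin p → ℝ)
    (P : MeasureTheory.Measure (FactorParam p k n)) [MeasureTheory.IsProbabilityMeasure P]
    (hQ : MeasureTheory.Integrable (fun θ => Qbound Y θ) P)
    (M : ℝ) (hM : ∀ᵐ θ ∂P, ∀ t ∈ Set.Icc (0 : ℝ) 1, pathLik Y θ t ≤ M) :
    ∀ t ∈ Set.Icc (0 : ℝ) 1,
      HasDerivWithinAt (fun s : ℝ => ∫ θ, pathLik Y θ s ∂P)
        (∫ θ, scoreU Y θ t * pathLik Y θ t ∂P) (Set.Icc (0 : ℝ) 1) t := by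
  intro t ht
  have h_norm_pathLik : ∀ (θ : FactorParam p k n) s, ‖pathLik Y θ s‖ = pathLik Y θ s := fun θ s =>
    Real.norm_of_nonneg (pathLik_pos Y θ s).le
  refine hasDerivWithinAt_integral_of_dominated_of_convex (bound := fun θ => Qbound Y θ * M)
    (convex_Icc 0 1) ht (fun s _ => (measurable_pathLik Y s).aestronglyMeasurable) ?_
    (ae_of_all _ fun θ s _ => (hasDerivAt_pathLik Y θ s).hasDerivWithinAt) ?_ (hQ.mul_const M)
  · refine (integrable_const M).mono' (measurable_pathLik Y t).aestronglyMeasurable ?_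
    filter_upwards [hM] with θ hθ
    rw [h_norm_pathLik]
    exact hθ t ht
  · filter_upwards [hM] with θ hθ s hs
    have h_score := abs_scoreU_le_Qbound Y θ (abs_le.2 ⟨by linarith [hs.1], hs.2⟩)
    rw [norm_mul, h_norm_pathLik, Real.norm_eq_abs]
    exact mul_le_mul h_score (hθ s hs) (pathLik_pos Y θ s).le ((abs_nonneg _).trans h_score)
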